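/- For every odd k ≥ 1 and n = 3^k − 1, the odd cover number of the complete graph K_n equals n/2; i.e., b(3^k − 1) = (3^k − 1)/2. -/

import Mathlib

set_option linter.unusedSectionVars false
set_option linter.unusedVariables false
set_option maxHeartbeats 1000000


open Finset

/-- `e` is an edge of the complete `r`-partite `r`-graph with parts `P 0, ..., P (r-1)`:
it meets every part in exactly one vertex. -/
def IsEdge {α : Type*} [DecidableEq α] {r : ℕ} (P : Fin r → Finset α) (e : Finset α) : Prop :=
  ∀ i, (e ∩ P i).card = 1

instance {α : Type*} [DecidableEq α] {r : ℕ} (P : Fin r → Finset α) (e : Finset α) :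
    Decidable (IsEdge P e) :=
  inferInstanceAs (Decidable (∀ _, _))

/-- The family `H` of complete `r`-partite `r`-graphs (each given by `r` pairwise disjoint
parts inside `V`) is an odd cover of the complete `r`-graph on `V`: every `r`-subset of `V`
is an edge of an odd number of members. -/
def IsOddCoverOn {α : Type*} [DecidableEq α] (V : Finset α) {r m : ℕ}
    (H : Fin m → Fin r → Finset α) : Prop :=
  (∀ i j, H i j ⊆ V) ∧
  (∀ i, Pairwise (Function.onFun Disjoint (H i))) ∧
  ∀ e ⊆ V, e.card = r → Odd ((Finset.univ.filter fun i => IsEdge (H i) e)).card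

/-- `oddCoverNumber r n` is the odd cover number `b_r(n)` of `K_n^(r)`. -/
noncomputable def oddCoverNumber (r n : ℕ) : ℕ :=
  sInf {m | ∃ H : Fin m → Fin r → Finset (Fin n), IsOddCoverOn Finset.univ H}


section TraceLemmas
variable (k : ℕ) [NeZero k]

local notation "F" => GaloisField 3 k

noncomputable instance : Fintype (GaloisField 3 k) := Fintype.ofFinite _

noncomputable def Tr : F →ₗ[ZMod 3] ZMod 3 := Algebra.trace (ZMod 3) F

lemma cardF : Fintype.card F = 3 ^ k := by
  have := GaloisField.card 3 k (NeZero.ne k)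
  simpa [Nat.card_eq_fintype_card] using this

lemma tr_nondeg {z : F} (h : ∀ α : F, Tr k (z * α) = 0) : z = 0 := by
  have hnd := traceForm_nondegenerate (ZMod 3) F
  exact hnd.1 z (fun α => by simpa [Algebra.traceForm_apply, Tr] using h α)

lemma tr_surj {x : F} (hx : x ≠ 0) (s : ZMod 3) : ∃ α : F, Tr k (x * α) = s := by
  have h : ¬ (∀ α : F, Tr k (x * α) = 0) := fun h => hx (tr_nondeg k h)
  push_neg at h
  obtain ⟨u, hu⟩ := h
  set c := Tr k (x * u) with hc
  refine ⟨(s * c⁻¹) • u, ?_⟩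
  rw [mul_smul_comm, map_smul]
  simp only [smul_eq_mul, ← hc]
  field_simp

lemma two_smul_neg (x : F) : (2 : ZMod 3) • x = -x := by
  have h3 : (3 : ZMod 3) • x = 0 := by
    have : (3 : ZMod 3) = 0 := by decide
    rw [this, zero_smul]
  have h2 : (2 : ZMod 3) • x + x = (3 : ZMod 3) • x := by
    have h : (3 : ZMod 3) = 2 + 1 := by decide
    rw [h, add_smul, one_smul]
  rw [h3] at h2
  exact eq_neg_of_add_eq_zero_left h2

lemma my_neg_ne_self {x : F} (hx : x ≠ 0) : -x ≠ x := by
  intro h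
  apply hx
  have h2 : x + x = 0 := by
    nth_rewrite 1 [← h]; exact neg_add_cancel x
  have : (2 : ZMod 3) • x = x + x := two_smul _ x
  rw [h2] at this
  have h2ne : (2 : ZMod 3) ≠ 0 := by decide
  have := smul_eq_zero.mp this
  tauto

lemma two_surj {x y : F} (hx : x ≠ 0) (hy : y ≠ 0) (hyx : y ≠ x) (hyx' : y ≠ -x) :
    ∀ s t : ZMod 3, ∃ α : F, Tr k (x * α) = s ∧ Tr k (y * α) = t := by
  -- step 1 : a w with Tr(x w)=0, Tr(y w) ≠ 0
  have step : ∀ x y : F, x ≠ 0 → y ≠ 0 → y ≠ x → y ≠ -x →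
      ∃ w : F, Tr k (x * w) = 0 ∧ Tr k (y * w) ≠ 0 := by
    intro x y hx hy hyx hyx'
    by_contra hcon
    push_neg at hcon
    obtain ⟨u, hu⟩ := tr_surj k hx 1
    set b := Tr k (y * u) with hb
    have key : ∀ α : F, Tr k ((y - b • x) * α) = 0 := by
      intro α
      have hβ : Tr k (x * (α - Tr k (x * α) • u)) = 0 := by
        rw [mul_sub, map_sub, mul_smul_comm, map_smul, hu, smul_eq_mul, mul_one, sub_self]
      have hyβ := hcon _ hβ
      rw [mul_sub, map_sub, mul_smul_comm, map_smul, smul_eq_mul, ← hb] at hyβ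
      have hyα : Tr k (y * α) = Tr k (x * α) * b := by
        have := sub_eq_zero.mp hyβ
        linear_combination this
      rw [sub_mul, map_sub, smul_mul_assoc, map_smul, smul_eq_mul, hyα]
      ring
    have hyb : y = b • x := by
      have := tr_nondeg k key
      exact sub_eq_zero.mp this
    -- b ∈ {0,1,2}
    have hall : ∀ c : ZMod 3, c = 0 ∨ c = 1 ∨ c = 2 := by decide
    have : b = 0 ∨ b = 1 ∨ b = 2 := hall b
    rcases this with h | h | h
    · rw [h, zero_smul] at hyb; exact hy hyb
    · rw [h, one_smul] at hyb; exact hyx hyb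
    · rw [h, two_smul_neg] at hyb; exact hyx' hyb
  obtain ⟨w0, hw01, hw02⟩ := step x y hx hy hyx hyx'
  have hxy' : x ≠ -y := fun h => hyx' (by rw [h]; ring)
  have hxy : x ≠ y := fun h => hyx h.symm
  obtain ⟨w1, hw11, hw12⟩ := step y x hy hx hxy hxy'
  intro s t
  -- normalize
  set c0 := Tr k (y * w0) with hc0
  set c1 := Tr k (x * w1) with hc1
  refine ⟨(s * c1⁻¹) • w1 + (t * c0⁻¹) • w0, ?_, ?_⟩
  · rw [mul_add, map_add, mul_smul_comm, mul_smul_comm, map_smul, map_smul, hw01, ← hc1]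
    simp only [smul_eq_mul, mul_zero, add_zero]
    field_simp
  · rw [mul_add, map_add, mul_smul_comm, mul_smul_comm, map_smul, map_smul, hw11, ← hc0]
    simp only [smul_eq_mul, mul_zero, zero_add]
    field_simp

open scoped Classical in
noncomputable def Fib (x y : F) (s t : ZMod 3) : Finset F :=
  univ.filter fun α => Tr k (x * α) = s ∧ Tr k (y * α) = t

open scoped Classical in
noncomputable def Fib1 (x : F) (s : ZMod 3) : Finset F :=
  univ.filter fun α => Tr k (x * α) = s

open scoped Classical

lemma mem_Fib {x y : F} {s t : ZMod 3} {α : F} :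
    α ∈ Fib k x y s t ↔ Tr k (x * α) = s ∧ Tr k (y * α) = t := by
  simp [Fib]

lemma mem_Fib1 {x : F} {s : ZMod 3} {α : F} :
    α ∈ Fib1 k x s ↔ Tr k (x * α) = s := by
  simp [Fib1]

lemma fib_card_eq {x y : F} {s t s' t' : ZMod 3}
    (h : ∃ α : F, Tr k (x * α) = s ∧ Tr k (y * α) = t)
    (h' : ∃ α : F, Tr k (x * α) = s' ∧ Tr k (y * α) = t') :
    (Fib k x y s t).card = (Fib k x y s' t').card := by
  obtain ⟨a, ha1, ha2⟩ := h
  obtain ⟨a', ha'1, ha'2⟩ := h'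
  apply Finset.card_bij' (fun β _ => β - a + a') (fun β _ => β - a' + a)
  · intro β hβ
    rw [mem_Fib] at hβ ⊢
    constructor
    · rw [mul_add, mul_sub, map_add, map_sub, hβ.1, ha1, ha'1]; ring
    · rw [mul_add, mul_sub, map_add, map_sub, hβ.2, ha2, ha'2]; ring
  · intro β hβ
    rw [mem_Fib] at hβ ⊢
    constructor
    · rw [mul_add, mul_sub, map_add, map_sub, hβ.1, ha1, ha'1]; ring
    · rw [mul_add, mul_sub, map_add, map_sub, hβ.2, ha2, ha'2]; ring
  · intro β _; ring
  · intro β _; ring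

lemma fib1_card_eq {x : F} {s s' : ZMod 3}
    (h : ∃ α : F, Tr k (x * α) = s) (h' : ∃ α : F, Tr k (x * α) = s') :
    (Fib1 k x s).card = (Fib1 k x s').card := by
  obtain ⟨a, ha⟩ := h
  obtain ⟨a', ha'⟩ := h'
  apply Finset.card_bij' (fun β _ => β - a + a') (fun β _ => β - a' + a)
  · intro β hβ
    rw [mem_Fib1] at hβ ⊢
    rw [mul_add, mul_sub, map_add, map_sub, hβ, ha, ha']; ring
  · intro β hβ
    rw [mem_Fib1] at hβ ⊢
    rw [mul_add, mul_sub, map_add, map_sub, hβ, ha, ha']; ring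
  · intro β _; ring
  · intro β _; ring

lemma odd_of_mul_eq_pow {c d j : ℕ} (h : d * c = 3 ^ j) : Odd c := by
  rcases Nat.even_or_odd c with he | ho
  · exfalso
    have : Even (d * c) := he.mul_left d
    rw [h] at this
    have hodd : Odd (3 ^ j) := Odd.pow (by decide)
    exact (Nat.not_even_iff_odd.mpr hodd) this
  · exact ho

lemma good_card {x y : F} (hx : x ≠ 0) (hy : y ≠ 0) (hyx : y ≠ x) :
    ∃ c : ℕ, Odd c ∧
      (univ.filter fun α : F =>
        (Tr k (x * α) = 1 ∧ Tr k (y * α) = 2) ∨ (Tr k (x * α) = 2 ∧ Tr k (y * α) = 1)).card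
        = 2 * c := by
  have hsplit : (univ.filter fun α : F =>
        (Tr k (x * α) = 1 ∧ Tr k (y * α) = 2) ∨ (Tr k (x * α) = 2 ∧ Tr k (y * α) = 1)).card
      = (Fib k x y 1 2).card + (Fib k x y 2 1).card := by
    have hdisj : Disjoint
        (univ.filter fun α : F => Tr k (x * α) = 1 ∧ Tr k (y * α) = 2)
        (univ.filter fun α : F => Tr k (x * α) = 2 ∧ Tr k (y * α) = 1) := by
      rw [Finset.disjoint_left]
      intro a h1 h2
      simp only [mem_filter] at h1 h2
      rw [h1.2.1] at h2
      exact absurd h2.2.1 (by decide)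
    rw [Fib, Fib, Finset.filter_or, Finset.card_union_of_disjoint hdisj]
  by_cases hcase : y = -x
  · -- fibers reduce to Fib1
    have htr : ∀ α : F, Tr k (y * α) = - Tr k (x * α) := by
      intro α; rw [hcase, neg_mul, map_neg]
    have h12 : Fib k x y 1 2 = Fib1 k x 1 := by
      ext α
      rw [mem_Fib, mem_Fib1, htr]
      constructor
      · exact fun h => h.1
      · intro h; rw [h]; exact ⟨rfl, by decide⟩
    have h21 : Fib k x y 2 1 = Fib1 k x 2 := by
      ext α
      rw [mem_Fib, mem_Fib1, htr]
      constructor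
      · exact fun h => h.1
      · intro h; rw [h]; exact ⟨rfl, by decide⟩
    set c := (Fib1 k x 1).card with hc
    have h2c : (Fib1 k x 2).card = c := fib1_card_eq k (tr_surj k hx 2) (tr_surj k hx 1)
    refine ⟨c, ?_, ?_⟩
    · -- 3 * c = 3 ^ k
      have hsum : Fintype.card F = ∑ s : ZMod 3, (Fib1 k x s).card := by
        rw [← card_univ]
        apply Finset.card_eq_sum_card_fiberwise (f := fun α : F => Tr k (x * α))
        intro α _; exact mem_univ _
      have hconst : ∀ s : ZMod 3, (Fib1 k x s).card = c :=
        fun s => fib1_card_eq k (tr_surj k hx s) (tr_surj k hx 1)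
      rw [Finset.sum_congr rfl (fun s _ => hconst s), Finset.sum_const, card_univ] at hsum
      rw [cardF] at hsum
      have : 3 * c = 3 ^ k := by
        simpa [ZMod.card, smul_eq_mul] using hsum.symm
      exact odd_of_mul_eq_pow this
    · rw [hsplit, h12, h21, h2c]; omega
  · -- independent case
    have hsur := two_surj k hx hy hyx hcase
    set c := (Fib k x y 1 2).card with hc
    have h2c : (Fib k x y 2 1).card = c := fib_card_eq k (hsur 2 1) (hsur 1 2)
    refine ⟨c, ?_, ?_⟩
    · have hsum : Fintype.card F = ∑ p : ZMod 3 × ZMod 3,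
          (univ.filter fun α : F => (Tr k (x * α), Tr k (y * α)) = p).card := by
        rw [← card_univ]
        apply Finset.card_eq_sum_card_fiberwise (f := fun α : F => (Tr k (x * α), Tr k (y * α)))
        intro α _; exact mem_univ _
      have hconst : ∀ p : ZMod 3 × ZMod 3,
          (univ.filter fun α : F => (Tr k (x * α), Tr k (y * α)) = p).card = c := by
        intro p
        have : (univ.filter fun α : F => (Tr k (x * α), Tr k (y * α)) = p) = Fib k x y p.1 p.2 := by
          ext α; rw [mem_Fib, mem_filter]
          simp [Prod.ext_iff]
        rw [this]
        exact fib_card_eq k (hsur p.1 p.2) (hsur 1 2)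
      rw [Finset.sum_congr rfl (fun p _ => hconst p), Finset.sum_const, card_univ] at hsum
      rw [cardF] at hsum
      have : 9 * c = 3 ^ k := by
        simpa [smul_eq_mul] using hsum.symm
      exact odd_of_mul_eq_pow this
    · rw [hsplit, h2c]; omega

noncomputable def Sq : Finset F := (univ.filter fun x : F => x ≠ 0).image fun α => α * α

noncomputable def reps (β : F) : F :=
  if h : ∃ α : F, α ≠ 0 ∧ α * α = β then h.choose else 0

lemma reps_spec {β : F} (h : ∃ α : F, α ≠ 0 ∧ α * α = β) :
    reps k β ≠ 0 ∧ reps k β * reps k β = β := by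
  rw [reps, dif_pos h]; exact h.choose_spec

lemma mem_Sq_exists {β : F} (hβ : β ∈ Sq k) : ∃ α : F, α ≠ 0 ∧ α * α = β := by
  rw [Sq, mem_image] at hβ
  obtain ⟨α, hα, rfl⟩ := hβ
  exact ⟨α, (mem_filter.mp hα).2, rfl⟩

lemma pair_card_two {γ : F} (hγ : γ ≠ 0) : ({γ, -γ} : Finset F).card = 2 := by
  rw [card_insert_of_notMem, card_singleton]
  rw [mem_singleton]
  exact fun h => (my_neg_ne_self k hγ) h.symm

lemma sq_card : 2 * (Sq k).card = 3 ^ k - 1 := by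
  have hfib : ∀ β ∈ Sq k, ((univ.filter fun x : F => x ≠ 0).filter fun α => α * α = β)
      = {reps k β, -reps k β} := by
    intro β hβ
    obtain ⟨hne, hsq⟩ := reps_spec k (mem_Sq_exists k hβ)
    ext α
    simp only [mem_filter, mem_univ, true_and, mem_insert, mem_singleton]
    constructor
    · rintro ⟨hα0, hαsq⟩
      rw [← hsq] at hαsq
      exact mul_self_eq_mul_self_iff.mp hαsq
    · rintro (rfl | rfl)
      · exact ⟨hne, hsq⟩
      · exact ⟨neg_ne_zero.mpr hne, by rw [neg_mul_neg]; exact hsq⟩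
  have hsum := Finset.card_eq_sum_card_fiberwise
    (f := fun α : F => α * α) (s := univ.filter fun x : F => x ≠ 0) (t := Sq k)
    (fun α hα => by rw [Sq, mem_coe, mem_image]; exact ⟨α, hα, rfl⟩)
  have hcount : (univ.filter fun x : F => x ≠ 0).card = 3 ^ k - 1 := by
    rw [Finset.filter_ne', card_erase_of_mem (mem_univ _), card_univ, cardF]
  rw [hcount] at hsum
  rw [hsum]
  rw [Finset.sum_congr rfl (fun β hβ => by
    rw [hfib β hβ, pair_card_two k (reps_spec k (mem_Sq_exists k hβ)).1])]
  rw [Finset.sum_const, smul_eq_mul]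
  ring

end TraceLemmas

lemma pair_filter_card_one {γ : Type*} [DecidableEq γ] {u v : γ} (h : u ≠ v)
    (p : γ → Prop) [DecidablePred p] :
    (({u, v} : Finset γ).filter p).card = 1 ↔ ((p u ∧ ¬ p v) ∨ (p v ∧ ¬ p u)) := by
  rw [filter_insert, filter_singleton]
  by_cases hu : p u <;> by_cases hv : p v <;>
    simp [hu, hv, h, Finset.card_insert_of_notMem]

lemma inter_filter_univ {γ : Type*} [DecidableEq γ] [Fintype γ] (s : Finset γ)
    (p : γ → Prop) [DecidablePred p] : s ∩ univ.filter p = s.filter p := by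
  ext a; simp [mem_inter, mem_filter]

open scoped Classical in
lemma upper (k : ℕ) (hk : k ≠ 0) :
    ∃ H : Fin ((3 ^ k - 1) / 2) → Fin 2 → Finset (Fin (3 ^ k - 1)),
      IsOddCoverOn Finset.univ H := by
  haveI : NeZero k := ⟨hk⟩
  set n := 3 ^ k - 1 with hn
  set m := (3 ^ k - 1) / 2 with hm
  -- the equivalences
  have hq1 : 1 ≤ 3 ^ k := Nat.one_le_pow _ _ (by norm_num)
  have hSq : (Sq k).card = m := by
    have := sq_card k
    omega
  have hν : Fintype.card {x : GaloisField 3 k // x ≠ 0} = n := by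
    rw [Fintype.card_subtype]
    rw [Finset.filter_ne', card_erase_of_mem (mem_univ _), card_univ, cardF]
  have hε : Fintype.card {β : GaloisField 3 k // β ∈ Sq k} = m := by
    rw [Fintype.card_coe]; exact hSq
  set ν : Fin n ≃ {x : GaloisField 3 k // x ≠ 0} := (Fintype.equivFinOfCardEq hν).symm with hνdef
  set ε : Fin m ≃ {β : GaloisField 3 k // β ∈ Sq k} := (Fintype.equivFinOfCardEq hε).symm with hεdef
  refine ⟨fun i j => univ.filter fun v =>
      Tr k ((ν v).1 * reps k (ε i).1) = if j = (0 : Fin 2) then 1 else 2, ?_, ?_, ?_⟩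
  · intro i j; exact filter_subset _ _
  · intro i j j' hjj'
    have hne : (if j = (0 : Fin 2) then (1 : ZMod 3) else 2) ≠
        (if j' = (0 : Fin 2) then (1 : ZMod 3) else 2) := by
      fin_cases j <;> fin_cases j' <;> simp_all <;> decide
    rw [Function.onFun, Finset.disjoint_left]
    intro a h1 h2
    rw [mem_filter] at h1 h2
    exact hne (h1.2.symm.trans h2.2)
  · intro e _ hcard
    obtain ⟨u, v, huv, rfl⟩ := Finset.card_eq_two.mp hcard
    set x := (ν u).1 with hx
    set y := (ν v).1 with hy
    have hx0 : x ≠ 0 := (ν u).2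
    have hy0 : y ≠ 0 := (ν v).2
    have hyx : y ≠ x := by
      intro h
      exact huv (ν.injective (Subtype.ext (h.symm)))
    set P : GaloisField 3 k → Prop := fun α =>
      (Tr k (x * α) = 1 ∧ Tr k (y * α) = 2) ∨ (Tr k (x * α) = 2 ∧ Tr k (y * α) = 1) with hP
    -- IsEdge characterization
    have hiff : ∀ A B : ZMod 3,
        ((((A = 1 ∧ ¬ B = 1) ∨ (B = 1 ∧ ¬ A = 1))) ∧ (((A = 2 ∧ ¬ B = 2) ∨ (B = 2 ∧ ¬ A = 2))))
          ↔ ((A = 1 ∧ B = 2) ∨ (A = 2 ∧ B = 1)) := by decide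
    have hedge : ∀ i : Fin m,
        IsEdge (fun j => univ.filter fun w =>
          Tr k ((ν w).1 * reps k (ε i).1) = if j = (0 : Fin 2) then 1 else 2) {u, v}
        ↔ P (reps k (ε i).1) := by
      intro i
      set α := reps k (ε i).1 with hα
      rw [IsEdge, Fin.forall_fin_two]
      rw [inter_filter_univ, inter_filter_univ,
        pair_filter_card_one huv, pair_filter_card_one huv]
      simp only [hP, if_true, if_pos, if_neg]
      exact hiff (Tr k (x * α)) (Tr k (y * α))
    have hPneg : ∀ α : GaloisField 3 k, P (-α) ↔ P α := by
      intro α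
      have hd : ∀ A B : ZMod 3,
          (((-A = 1 ∧ -B = 2) ∨ (-A = 2 ∧ -B = 1))) ↔ ((A = 1 ∧ B = 2) ∨ (A = 2 ∧ B = 1)) := by
        decide
      simp only [hP, mul_neg, map_neg]
      exact hd (Tr k (x * α)) (Tr k (y * α))
    have hP0 : ∀ α : GaloisField 3 k, P α → α ≠ 0 := by
      intro α hPα h0
      rw [h0] at hPα
      simp only [hP, mul_zero, map_zero] at hPα
      have hna : ¬ ((0 : ZMod 3) = 1) := by decide
      have hnb : ¬ ((0 : ZMod 3) = 2) := by decide
      rcases hPα with ⟨h1, _⟩ | ⟨h1, _⟩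
      · exact hna h1
      · exact hnb h1
    have hstep1 : (univ.filter fun i : Fin m =>
        IsEdge (fun j => univ.filter fun w =>
          Tr k ((ν w).1 * reps k (ε i).1) = if j = (0 : Fin 2) then 1 else 2) {u, v}).card
        = ((Sq k).filter fun β => P (reps k β)).card := by
      rw [filter_congr (fun i _ => by rw [hedge i])]
      apply Finset.card_bij (fun i _ => (ε i).1)
      · intro i hi
        rw [mem_filter] at hi ⊢
        exact ⟨(ε i).2, hi.2⟩
      · intro i1 _ i2 _ hInjEq
        exact ε.injective (Subtype.ext hInjEq)
      · intro β hβ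
        rw [mem_filter] at hβ
        refine ⟨ε.symm ⟨β, hβ.1⟩, ?_, ?_⟩
        · rw [mem_filter]
          refine ⟨mem_univ _, ?_⟩
          rw [Equiv.apply_symm_apply]
          exact hβ.2
        · rw [Equiv.apply_symm_apply]
    have hstep2 : (univ.filter fun α : GaloisField 3 k => α ≠ 0 ∧ P α).card
        = 2 * ((Sq k).filter fun β => P (reps k β)).card := by
      have hmap : ∀ α ∈ (univ.filter fun α : GaloisField 3 k => α ≠ 0 ∧ P α),
          α * α ∈ (Sq k).filter fun β => P (reps k β) := by
        intro α hα
        rw [mem_filter] at hα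
        obtain ⟨_, hα0, hPα⟩ := hα
        have hex : ∃ γ : GaloisField 3 k, γ ≠ 0 ∧ γ * γ = α * α := ⟨α, hα0, rfl⟩
        obtain ⟨hr0, hrsq⟩ := reps_spec k hex
        rw [mem_filter]
        constructor
        · rw [Sq, mem_image]
          exact ⟨α, mem_filter.mpr ⟨mem_univ _, hα0⟩, rfl⟩
        · rcases mul_self_eq_mul_self_iff.mp hrsq with h | h
          · rw [h]; exact hPα
          · rw [h]; exact (hPneg α).mpr hPα
      have hfib : ∀ β ∈ (Sq k).filter (fun β => P (reps k β)),
          ((univ.filter fun α : GaloisField 3 k => α ≠ 0 ∧ P α).filter fun α => α * α = β)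
            = {reps k β, -reps k β} := by
        intro β hβ
        rw [mem_filter] at hβ
        obtain ⟨hβSq, hβP⟩ := hβ
        obtain ⟨hr0, hrsq⟩ := reps_spec k (mem_Sq_exists k hβSq)
        ext α
        simp only [mem_filter, mem_univ, true_and, mem_insert, mem_singleton]
        constructor
        · rintro ⟨⟨hα0, _⟩, hαsq⟩
          rw [← hrsq] at hαsq
          exact mul_self_eq_mul_self_iff.mp hαsq
        · rintro (rfl | rfl)
          · exact ⟨⟨hr0, hβP⟩, hrsq⟩
          · exact ⟨⟨neg_ne_zero.mpr hr0, (hPneg _).mpr hβP⟩, by rw [neg_mul_neg]; exact hrsq⟩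
      have hsum := Finset.card_eq_sum_card_fiberwise (f := fun α : GaloisField 3 k => α * α)
        (s := univ.filter fun α : GaloisField 3 k => α ≠ 0 ∧ P α)
        (t := (Sq k).filter fun β => P (reps k β)) hmap
      rw [hsum, Finset.sum_congr rfl (fun β hβ => by
        rw [hfib β hβ, pair_card_two k (reps_spec k (mem_Sq_exists k (mem_filter.mp hβ).1)).1]),
        Finset.sum_const, smul_eq_mul]
      ring
    have hstep3 : (univ.filter fun α : GaloisField 3 k => α ≠ 0 ∧ P α)
        = univ.filter P := by
      apply filter_congr
      intro α _
      exact ⟨fun h => h.2, fun h => ⟨hP0 α h, h⟩⟩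
    obtain ⟨c, hodd, hgc⟩ := good_card k hx0 hy0 hyx
    have hPfilter : (univ.filter P).card = 2 * c := by
      simp only [hP]; exact hgc
    have : ((Sq k).filter fun β => P (reps k β)).card = c := by
      rw [hstep3, hPfilter] at hstep2
      omega
    rw [hstep1, this]
    exact hodd

lemma odd_cast_eq_one {c : ℕ} (h : Odd c) : (c : ZMod 2) = 1 := by
  obtain ⟨j, rfl⟩ := h
  push_cast
  have h2 : (2 : ZMod 2) = 0 := by decide
  rw [h2]
  ring

lemma lower {n m : ℕ} (hn : Even n) (H : Fin m → Fin 2 → Finset (Fin n))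
    (hH : IsOddCoverOn Finset.univ H) : n ≤ 2 * m := by
  obtain ⟨-, hdisj, hcover⟩ := hH
  by_contra hlt
  push_neg at hlt
  set χ : Finset (Fin n) → Fin n → ZMod 2 := fun s u => if u ∈ s then 1 else 0 with hχ
  set G : (Fin n → ZMod 2) → (Fin m × Fin 2) → ZMod 2 :=
    fun f p => ∑ u ∈ H p.1 p.2, f u with hG
  have hcardlt : Fintype.card ((Fin m × Fin 2) → ZMod 2) < Fintype.card (Fin n → ZMod 2) := by
    rw [Fintype.card_fun, Fintype.card_fun]
    simp only [Fintype.card_prod, Fintype.card_fin, ZMod.card]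
    exact Nat.pow_lt_pow_right (by norm_num) (by omega)
  obtain ⟨f, g, hfg, hGfg⟩ := Fintype.exists_ne_map_eq_of_card_lt G hcardlt
  set v : Fin n → ZMod 2 := f - g with hv
  have hv0 : v ≠ 0 := sub_ne_zero.mpr hfg
  have hker : ∀ i j, ∑ u ∈ H i j, v u = 0 := by
    intro i j
    have := congrFun hGfg (i, j)
    simp only [hG] at this
    rw [hv]
    simp only [Pi.sub_apply, Finset.sum_sub_distrib, this, sub_self]
  -- the key entry identity
  have key : ∀ w z : Fin n, w ≠ z →
      ∑ i : Fin m, (χ (H i 0) w * χ (H i 1) z + χ (H i 1) w * χ (H i 0) z) = 1 := by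
    intro w z hwz
    have hterm : ∀ i : Fin m,
        (χ (H i 0) w * χ (H i 1) z + χ (H i 1) w * χ (H i 0) z)
          = if IsEdge (H i) {w, z} then 1 else 0 := by
      intro i
      have hd := hdisj i (show (0 : Fin 2) ≠ 1 by decide)
      rw [Function.onFun] at hd
      have hdl := Finset.disjoint_left.mp hd
      have hint : ∀ s : Finset (Fin n), ({w, z} : Finset (Fin n)) ∩ s = ({w, z} : Finset (Fin n)).filter (· ∈ s) := by
        intro s; ext a; simp [mem_inter, mem_filter]
      have hedgechar : IsEdge (H i) {w, z} ↔
          (((w ∈ H i 0 ∧ ¬ z ∈ H i 0) ∨ (z ∈ H i 0 ∧ ¬ w ∈ H i 0)) ∧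
           ((w ∈ H i 1 ∧ ¬ z ∈ H i 1) ∨ (z ∈ H i 1 ∧ ¬ w ∈ H i 1))) := by
        rw [IsEdge, Fin.forall_fin_two, hint, hint,
          pair_filter_card_one hwz, pair_filter_card_one hwz]
      simp only [hedgechar]
      by_cases hw0 : w ∈ H i 0 <;> by_cases hw1 : w ∈ H i 1 <;>
        by_cases hz0 : z ∈ H i 0 <;> by_cases hz1 : z ∈ H i 1 <;>
        first
          | (exact absurd hw1 (hdl hw0))
          | (exact absurd hz1 (hdl hz0))
          | (simp [hχ, hw0, hw1, hz0, hz1])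
    rw [Finset.sum_congr rfl (fun i _ => hterm i), Finset.sum_boole]
    have hcard2 : ({w, z} : Finset (Fin n)).card = 2 := by
      rw [card_insert_of_notMem (by simp [hwz]), card_singleton]
    exact odd_cast_eq_one (hcover {w, z} (subset_univ _) hcard2)
  -- each row sum gives v w = total sum
  set S : ZMod 2 := ∑ z : Fin n, v z with hS
  have hchi : ∀ s : Finset (Fin n), ∑ z : Fin n, χ s z * v z = ∑ u ∈ s, v u := by
    intro s
    rw [Finset.sum_congr rfl (fun z _ => by
      show χ s z * v z = if z ∈ s then v z else 0
      rw [hχ]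
      by_cases h : z ∈ s <;> simp [h])]
    rw [Finset.sum_ite_mem, univ_inter]
  have hab : ∀ a b : ZMod 2, a * b + b * a = 0 := by decide
  have hrow : ∀ w : Fin n, v w = S := by
    intro w
    have h1 : ∑ z : Fin n, (∑ i : Fin m,
        (χ (H i 0) w * χ (H i 1) z + χ (H i 1) w * χ (H i 0) z)) * v z = 0 := by
      calc ∑ z : Fin n, (∑ i : Fin m,
            (χ (H i 0) w * χ (H i 1) z + χ (H i 1) w * χ (H i 0) z)) * v z
          = ∑ z : Fin n, ∑ i : Fin m,
            (χ (H i 0) w * (χ (H i 1) z * v z) + χ (H i 1) w * (χ (H i 0) z * v z)) := by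
            apply Finset.sum_congr rfl
            intro z _
            rw [Finset.sum_mul]
            apply Finset.sum_congr rfl
            intro i _
            ring
        _ = ∑ i : Fin m, ∑ z : Fin n,
            (χ (H i 0) w * (χ (H i 1) z * v z) + χ (H i 1) w * (χ (H i 0) z * v z)) :=
            Finset.sum_comm
        _ = ∑ i : Fin m, (χ (H i 0) w * (∑ z : Fin n, χ (H i 1) z * v z)
              + χ (H i 1) w * (∑ z : Fin n, χ (H i 0) z * v z)) := by
            apply Finset.sum_congr rfl
            intro i _
            rw [Finset.sum_add_distrib, Finset.mul_sum, Finset.mul_sum]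
        _ = 0 := by
            apply Finset.sum_eq_zero
            intro i _
            rw [hchi, hchi, hker, hker, mul_zero, mul_zero, add_zero]
    have h2 : ∑ z : Fin n, (if z = w then 0 else 1) * v z = 0 := by
      have hcongr : ∑ z : Fin n, (if z = w then 0 else 1) * v z
          = ∑ z : Fin n, (∑ i : Fin m,
            (χ (H i 0) w * χ (H i 1) z + χ (H i 1) w * χ (H i 0) z)) * v z := by
        apply Finset.sum_congr rfl
        intro z _
        by_cases h : z = w
        · subst h
          rw [if_pos rfl, zero_mul,
            show (∑ i : Fin m, (χ (H i 0) z * χ (H i 1) z + χ (H i 1) z * χ (H i 0) z)) = 0 from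
              Finset.sum_eq_zero (fun i _ => hab _ _), zero_mul]
        · rw [if_neg h, key w z (fun hh => h hh.symm)]
      rw [hcongr, h1]
    have h3 : ∑ z : Fin n, (if z = w then 0 else 1) * v z = S - v w := by
      rw [Finset.sum_congr rfl (fun z _ => by
        show (if z = w then 0 else 1) * v z = v z - (if z = w then v z else 0)
        by_cases h : z = w <;> simp [h])]
      rw [Finset.sum_sub_distrib, Finset.sum_ite_eq' univ w v, if_pos (mem_univ w), ← hS]
    rw [h3] at h2
    have := sub_eq_zero.mp h2
    exact this.symm
  obtain ⟨w0, hw0⟩ := Function.ne_iff.mp hv0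
  have hS1 : S = 1 := by
    have hSne : S ≠ 0 := by
      rw [← hrow w0]
      simpa using hw0
    have : ∀ a : ZMod 2, a ≠ 0 → a = 1 := by decide
    exact this S hSne
  have hS0 : S = 0 := by
    rw [hS, Finset.sum_congr rfl (fun z _ => hrow z), Finset.sum_const, card_univ,
      Fintype.card_fin, hS1, nsmul_eq_mul, mul_one]
    rw [ZMod.natCast_eq_zero_iff]
    exact hn.two_dvd
  rw [hS1] at hS0
  exact absurd hS0 (by decide)

/-- For every odd `k ≥ 1` and `n = 3^k - 1`, the odd cover number of `K_n` is `n/2`. -/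
theorem stmt8 (k : ℕ) (hk : 1 ≤ k) (hko : Odd k) :
    oddCoverNumber 2 (3 ^ k - 1) = (3 ^ k - 1) / 2 := by
  have hk0 : k ≠ 0 := by omega
  have hq1 : 1 ≤ 3 ^ k := Nat.one_le_pow _ _ (by norm_num)
  have hqodd : Odd (3 ^ k) := Odd.pow (by decide)
  have hneven : Even (3 ^ k - 1) := by
    obtain ⟨j, hj⟩ := hqodd
    exact ⟨j, by omega⟩
  have hmem : (3 ^ k - 1) / 2 ∈
      {m | ∃ H : Fin m → Fin 2 → Finset (Fin (3 ^ k - 1)), IsOddCoverOn Finset.univ H} :=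
    upper k hk0
  rw [oddCoverNumber]
  apply le_antisymm
  · exact Nat.sInf_le hmem
  · apply le_csInf ⟨_, hmem⟩
    rintro b ⟨H, hH⟩
    have := lower hneven H hH
    omega
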